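/- arXiv:2402.01607 — 2 statements merged into one kernel-verified Lean document; each statement's English description precedes it below -/
import Mathlib

section
/- Let m be a Borel probability measure on ℝ and let T₁, T₂ : ℝ → ℝ be strictly monotone increasing functions with Measure.map T₁ m = Measure.map T₂ m. If the CDF of the common pushforward measure Measure.map T₁ m is injective, then T₁ = T₂. (Uniqueness of the strictly increasing transformation carrying a given noise distribution to a given outcome distribution; this underlies the identifiability of counterfactuals from the observational distribution.) -/
open MeasureTheory

noncomputable def cdfOf (m : Measure ℝ) (x : ℝ) : ℝ := (m (Set.Iic x)).toReal

theorem StrictMono.preimage_Iic_apply {α β : Type*} [LinearOrder α] [Preorder β] {f : α → β}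
    (hf : StrictMono f) (a : α) : f ⁻¹' Set.Iic (f a) = Set.Iic a :=
  Set.ext fun _ => hf.le_iff_le

theorem cdfOf_map_apply_of_strictMono (m : Measure ℝ) {T : ℝ → ℝ} (hT : StrictMono T) (x : ℝ) :
    cdfOf (m.map T) (T x) = cdfOf m x := by
  rw [cdfOf, Measure.map_apply hT.monotone.measurable measurableSet_Iic, hT.preimage_Iic_apply,
    cdfOf]

theorem strictMono_transport_unique_general (m : Measure ℝ)
    (T₁ T₂ : ℝ → ℝ) (h₁ : StrictMono T₁) (h₂ : StrictMono T₂)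
    (hmap : Measure.map T₁ m = Measure.map T₂ m)
    (hinj : Function.Injective (cdfOf (Measure.map T₁ m))) :
    T₁ = T₂ :=
  funext fun x => hinj <| by
    rw [cdfOf_map_apply_of_strictMono m h₁, hmap, cdfOf_map_apply_of_strictMono m h₂]

/-- Uniqueness of the strictly increasing transformation carrying a given noise
distribution to a given outcome distribution: if `T₁, T₂` are strictly increasing,
push `m` to the same measure, and the CDF of that common pushforward is injective,
then `T₁ = T₂`. -/
theorem strictMono_transport_unique (m : Measure ℝ) [IsProbabilityMeasure m]
    (T₁ T₂ : ℝ → ℝ) (h₁ : StrictMono T₁) (h₂ : StrictMono T₂)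
    (hmap : Measure.map T₁ m = Measure.map T₂ m)
    (hinj : Function.Injective (cdfOf (Measure.map T₁ m))) :
    T₁ = T₂ :=
  strictMono_transport_unique_general m T₁ T₂ h₁ h₂ hmap hinj
end

section
/- (Characterization of the counterfactual instance by quantile matching.) Consider a topologically ordered SCM over n real variables in which every slice u ↦ f i v u is strictly monotone increasing, and suppose that for every i : Fin n and every p : Fin n → ℝ the CDF of the conditional distribution ν i p is injective. Let u : Fin n → ℝ, v = solve u, C ⊆ Fin n, c : Fin n → ℝ, and v* = solveC u. Then v* is the unique vector w : Fin n → ℝ such that (a) w i = c i for every i ∈ C, and (b) F_{ν i w}(w i) = F_{ν i v}(v i) for every i ∉ C. Since the conditions (a)–(b) refer only to the conditional distributions ν i p (which are determined by the causal graph and the observational joint distribution), the counterfactual instance is identifiable. -/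
/-!
Since each slice `f i p` is strictly increasing, `F_{ν i p}(f i p x) = F_{μ i}(x)`. Hence both
`v = solve u` and `v* = solveC u` have, at every `i ∉ C`, conditional CDF value `F_{μ i}(u i)`;
conversely, by injectivity of the conditional CDFs, the matching condition forces
`w i = f i w (u i)`, so `w` solves the intervened SCM with noise `u`. Solutions of a system
in which each coordinate depends only on earlier ones are unique, by well-founded induction.
-/

open MeasureTheory

theorem cdfOf_map_apply_of_strictMono_s8 {g : ℝ → ℝ} (hg : StrictMono g) (μ : Measure ℝ) (x : ℝ) :
    cdfOf (μ.map g) (g x) = cdfOf μ x := by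
  have hpre : g ⁻¹' Set.Iic (g x) = Set.Iic x := by
    ext y
    simp [hg.le_iff_le]
  rw [cdfOf, Measure.map_apply hg.monotone.measurable measurableSet_Iic, hpre, cdfOf]

theorem eq_apply_of_cdfOf_map_eq {g : ℝ → ℝ} (hg : StrictMono g) {μ : Measure ℝ}
    (hinj : Function.Injective (cdfOf (μ.map g))) {x y : ℝ}
    (h : cdfOf (μ.map g) y = cdfOf μ x) : y = g x :=
  hinj (h.trans (cdfOf_map_apply_of_strictMono_s8 hg μ x).symm)

theorem eq_of_forall_eq_apply_of_dependsOn_lt {ι α : Type*} [Preorder ι] [WellFoundedLT ι]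
    (g : ι → (ι → α) → α) (hg : ∀ i v w, (∀ j < i, v j = w j) → g i v = g i w)
    {v w : ι → α} (hv : ∀ i, v i = g i v) (hw : ∀ i, w i = g i w) : v = w := by
  funext i
  induction i using WellFoundedLT.induction with
  | _ i ih => rw [hv i, hw i]; exact hg i v w ih

theorem counterfactual_characterized_by_quantile_matching_general (n : ℕ)
    (pa : Fin n → Finset (Fin n))
    (hpa : ∀ i : Fin n, ∀ j ∈ pa i, j < i)
    (f : Fin n → (Fin n → ℝ) → ℝ → ℝ)
    (hloc : ∀ i : Fin n, ∀ v w : Fin n → ℝ, (∀ j ∈ pa i, v j = w j) → f i v = f i w)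
    (hmono : ∀ (i : Fin n) (v : Fin n → ℝ), StrictMono (f i v))
    (μ : Fin n → Measure ℝ)
    (hinj : ∀ (i : Fin n) (p : Fin n → ℝ),
      Function.Injective (cdfOf (Measure.map (f i p) (μ i))))
    (solve : (Fin n → ℝ) → (Fin n → ℝ))
    (hsolve : ∀ (u : Fin n → ℝ) (i : Fin n), solve u i = f i (solve u) (u i))
    (C : Set (Fin n)) (c : Fin n → ℝ)
    (solveC : (Fin n → ℝ) → (Fin n → ℝ))
    (hsolveC : ∀ u : Fin n → ℝ,
      (∀ i ∈ C, solveC u i = c i) ∧ ∀ i ∉ C, solveC u i = f i (solveC u) (u i))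
    (u : Fin n → ℝ) :
    (∀ i ∈ C, solveC u i = c i)
    ∧ (∀ i ∉ C,
        cdfOf (Measure.map (f i (solveC u)) (μ i)) (solveC u i)
          = cdfOf (Measure.map (f i (solve u)) (μ i)) (solve u i))
    ∧ ∀ w : Fin n → ℝ,
        (∀ i ∈ C, w i = c i) →
        (∀ i ∉ C,
          cdfOf (Measure.map (f i w) (μ i)) (w i)
            = cdfOf (Measure.map (f i (solve u)) (μ i)) (solve u i)) →
        w = solveC u := by
  obtain ⟨hsolveC_mem, hsolveC_not_mem⟩ := hsolveC u
  have hcdf_solve (i : Fin n) : cdfOf ((μ i).map (f i (solve u))) (solve u i)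
      = cdfOf (μ i) (u i) := by
    rw [hsolve u i, cdfOf_map_apply_of_strictMono_s8 (hmono i _)]
  refine ⟨hsolveC_mem, fun i hi => ?_, fun w hwC hwcdf => ?_⟩
  · rw [hsolveC_not_mem i hi, cdfOf_map_apply_of_strictMono_s8 (hmono i _), hcdf_solve]
  classical
  have hw_not_mem (i : Fin n) (hi : i ∉ C) : w i = f i w (u i) :=
    eq_apply_of_cdfOf_map_eq (hmono i w) (hinj i w) ((hwcdf i hi).trans (hcdf_solve i))
  refine eq_of_forall_eq_apply_of_dependsOn_lt (fun i x => if i ∈ C then c i else f i x (u i))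
    (fun i x y hxy => ?_) (fun i => ?_) (fun i => ?_)
  · split_ifs
    · rfl
    · rw [hloc i x y fun j hj => hxy j (hpa i j hj)]
  · split_ifs with hi
    exacts [hwC i hi, hw_not_mem i hi]
  · split_ifs with hi
    exacts [hsolveC_mem i hi, hsolveC_not_mem i hi]

/-- Characterization of the counterfactual instance by quantile matching: in a
topologically ordered SCM with strictly increasing mechanism slices whose conditional
CDFs are injective, the counterfactual instance `v* = solveC u` under `do(C = c)` is the
unique vector `w` with (a) `w i = c i` for `i ∈ C` and (b)
`F_{ν i w}(w i) = F_{ν i v}(v i)` for `i ∉ C`, where `v = solve u` is the factual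
instance and `ν i p = Measure.map (f i p) (μ i)`. Since these conditions refer only to
the conditional distributions, the counterfactual instance is identifiable. -/
theorem counterfactual_characterized_by_quantile_matching (n : ℕ)
    (pa : Fin n → Finset (Fin n))
    (hpa : ∀ i : Fin n, ∀ j ∈ pa i, j < i)
    (f : Fin n → (Fin n → ℝ) → ℝ → ℝ)
    (hloc : ∀ i : Fin n, ∀ v w : Fin n → ℝ, (∀ j ∈ pa i, v j = w j) → f i v = f i w)
    (hmono : ∀ (i : Fin n) (v : Fin n → ℝ), StrictMono (f i v))
    (μ : Fin n → Measure ℝ) [∀ i, IsProbabilityMeasure (μ i)]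
    (hinj : ∀ (i : Fin n) (p : Fin n → ℝ),
      Function.Injective (cdfOf (Measure.map (f i p) (μ i))))
    (solve : (Fin n → ℝ) → (Fin n → ℝ))
    (hsolve : ∀ (u : Fin n → ℝ) (i : Fin n), solve u i = f i (solve u) (u i))
    (C : Set (Fin n)) (c : Fin n → ℝ)
    (solveC : (Fin n → ℝ) → (Fin n → ℝ))
    (hsolveC : ∀ u : Fin n → ℝ,
      (∀ i ∈ C, solveC u i = c i) ∧ ∀ i ∉ C, solveC u i = f i (solveC u) (u i))
    (u : Fin n → ℝ) :
    (∀ i ∈ C, solveC u i = c i)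
    ∧ (∀ i ∉ C,
        cdfOf (Measure.map (f i (solveC u)) (μ i)) (solveC u i)
          = cdfOf (Measure.map (f i (solve u)) (μ i)) (solve u i))
    ∧ ∀ w : Fin n → ℝ,
        (∀ i ∈ C, w i = c i) →
        (∀ i ∉ C,
          cdfOf (Measure.map (f i w) (μ i)) (w i)
            = cdfOf (Measure.map (f i (solve u)) (μ i)) (solve u i)) →
        w = solveC u :=
  counterfactual_characterized_by_quantile_matching_general n pa hpa f hloc hmono μ hinj solve
    hsolve C c solveC hsolveC u
end
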